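/- Let α ∈ (0,1), L > 0, and let (b_n)_{n≥1} be a sequence of real numbers with Σ_{n=1}^∞ n² |b_n| < ∞. Define u(t,x) = Σ_{n=1}^∞ b_n exp(−(nπ/L)² t^α/α)·sin(nπx/L) for t ≥ 0 and x ∈ [0,L]. Then: (i) the series converges absolutely for all t ≥ 0 and x ∈ [0,L]; (ii) u(t,0) = u(t,L) = 0 for all t ≥ 0; (iii) u(0,x) = Σ_{n=1}^∞ b_n sin(nπx/L); and (iv) for every t > 0 and every x ∈ (0,L), the conformable fractional derivative of order α in t satisfies T_α u(t,x) = ∂²u/∂x²(t,x). Thus u solves the conformable fractional heat equation on [0,L] with zero Dirichlet boundary conditions and initial data given by the sine series with coefficients b_n. -/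

import Mathlib

/-!
For a differentiable `f`, the conformable derivative is `T_α f (t) = t ^ (1 - α) * f' t`, and
`d/dt exp (-k² tᵅ / α) = -k² t ^ (α - 1) exp (-k² tᵅ / α)`; hence each mode
`bₙ exp (-kₙ² tᵅ / α) sin (kₙ x)` satisfies `T_α = ∂²/∂x²` exactly. Since `∑ n² |bₙ| < ∞`
dominates the termwise `x`-derivatives up to order two, and, because `α ≤ 1` gives
`s ^ (α - 1) ≤ (t / 2) ^ (α - 1)` for `s > t / 2`, also the termwise `t`-derivatives near `t`,
the series may be differentiated term by term.
-/

noncomputable section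
open Real Filter Topology

/-- The conformable fractional derivative of order `α` of `f` at `t`:
`f` is `α`-differentiable at `t` with conformable derivative `L` if
`(f (t + ε * t^(1-α)) - f t) / ε → L` as `ε → 0`. -/
def HasConformableDerivAt (α : ℝ) (f : ℝ → ℝ) (L t : ℝ) : Prop :=
  Tendsto (fun ε : ℝ => (f (t + ε * t ^ (1 - α)) - f t) / ε) (𝓝[≠] (0 : ℝ)) (𝓝 L)

theorem HasDerivAt.hasConformableDerivAt {α t f' : ℝ} {f : ℝ → ℝ} (hf : HasDerivAt f f' t) :
    HasConformableDerivAt α f (t ^ (1 - α) * f') t := by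
  have hline : HasDerivAt (fun ε : ℝ => t + ε * t ^ (1 - α)) (t ^ (1 - α)) 0 := by
    simpa using ((hasDerivAt_id (0 : ℝ)).mul_const (t ^ (1 - α))).const_add t
  have hf0 : HasDerivAt f f' (t + 0 * t ^ (1 - α)) := by simpa using hf
  have hslope := (hf0.comp 0 hline).tendsto_slope_zero
  simp only [zero_add, zero_mul, add_zero, Function.comp_def, smul_eq_mul] at hslope
  unfold HasConformableDerivAt
  simpa only [mul_comm f', div_eq_inv_mul] using hslope

theorem summable_abs_mul_of_summable_abs_mul_sq {a k : ℕ → ℝ} (h0 : Summable fun n => |a n|)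
    (h2 : Summable fun n => |a n| * k n ^ 2) : Summable fun n => |a n * k n| := by
  refine .of_nonneg_of_le (fun n => abs_nonneg _) (fun n => ?_) (h0.add h2)
  have hk : |k n| ≤ 1 + k n ^ 2 := by nlinarith [abs_nonneg (k n), sq_abs (k n)]
  calc |a n * k n| = |a n| * |k n| := abs_mul _ _
    _ ≤ |a n| * (1 + k n ^ 2) := by gcongr
    _ = |a n| + |a n| * k n ^ 2 := by ring

section SineSeries

variable {a k : ℕ → ℝ}

theorem hasDerivAt_tsum_mul_sin (h : Summable fun n => |a n * k n|) (x : ℝ) :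
    HasDerivAt (fun y => ∑' n, a n * sin (k n * y)) (∑' n, a n * k n * cos (k n * x)) x := by
  have hterm (n : ℕ) (y : ℝ) :
      HasDerivAt (fun y => a n * sin (k n * y)) (a n * k n * cos (k n * y)) y :=
    ((((hasDerivAt_id' y).const_mul (k n)).sin).const_mul (a n)).congr_deriv (by ring)
  have hbound (n : ℕ) (y : ℝ) : ‖a n * k n * cos (k n * y)‖ ≤ |a n * k n| := by
    rw [Real.norm_eq_abs, abs_mul]
    exact mul_le_of_le_one_right (abs_nonneg _) (abs_cos_le_one _)
  exact hasDerivAt_tsum h hterm hbound (y₀ := 0) (by simp) x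

theorem hasDerivAt_tsum_mul_cos (h0 : Summable a) (h : Summable fun n => |a n * k n|) (x : ℝ) :
    HasDerivAt (fun y => ∑' n, a n * cos (k n * y)) (-∑' n, a n * k n * sin (k n * x)) x := by
  have hterm (n : ℕ) (y : ℝ) :
      HasDerivAt (fun y => a n * cos (k n * y)) (-(a n * k n * sin (k n * y))) y :=
    ((((hasDerivAt_id' y).const_mul (k n)).cos).const_mul (a n)).congr_deriv (by ring)
  have hbound (n : ℕ) (y : ℝ) : ‖-(a n * k n * sin (k n * y))‖ ≤ |a n * k n| := by
    rw [norm_neg, Real.norm_eq_abs, abs_mul]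
    exact mul_le_of_le_one_right (abs_nonneg _) (abs_sin_le_one _)
  rw [← tsum_neg]
  exact hasDerivAt_tsum h hterm hbound (y₀ := 0) (by simpa using h0) x

theorem deriv_deriv_tsum_mul_sin (h0 : Summable fun n => |a n|)
    (h2 : Summable fun n => |a n| * k n ^ 2) (x : ℝ) :
    deriv (deriv fun y => ∑' n, a n * sin (k n * y)) x =
      -∑' n, a n * k n ^ 2 * sin (k n * x) := by
  have h1 := summable_abs_mul_of_summable_abs_mul_sq h0 h2
  have hderiv : (deriv fun y => ∑' n, a n * sin (k n * y)) =
      fun y => ∑' n, a n * k n * cos (k n * y) :=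
    funext fun y => (hasDerivAt_tsum_mul_sin h1 y).deriv
  have h2' : Summable fun n => |a n * k n * k n| := h2.congr fun n => by
    rw [abs_mul, abs_mul, mul_assoc, abs_mul_abs_self, sq]
  simpa only [hderiv, mul_assoc, ← sq] using (hasDerivAt_tsum_mul_cos h1.of_abs h2' x).deriv

end SineSeries

def heatSeries (α : ℝ) (c k : ℕ → ℝ) (t x : ℝ) : ℝ :=
  ∑' n, c n * exp (-k n ^ 2 * t ^ α / α) * sin (k n * x)

theorem exp_neg_sq_mul_rpow_div_le_one {α t : ℝ} (hα : 0 < α) (ht : 0 ≤ t) (k : ℝ) :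
    exp (-k ^ 2 * t ^ α / α) ≤ 1 := by
  rw [exp_le_one_iff]
  have : 0 ≤ t ^ α := rpow_nonneg ht α
  exact div_nonpos_of_nonpos_of_nonneg (by nlinarith [sq_nonneg k]) hα.le

theorem hasDerivAt_exp_neg_sq_mul_rpow_div {α t : ℝ} (hα : α ≠ 0) (ht : t ≠ 0) (k : ℝ) :
    HasDerivAt (fun s => exp (-k ^ 2 * s ^ α / α))
      (-k ^ 2 * t ^ (α - 1) * exp (-k ^ 2 * t ^ α / α)) t := by
  have hpow := (hasDerivAt_rpow_const (p := α) (Or.inl ht)).const_mul (-k ^ 2) |>.div_const α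
  refine hpow.exp.congr_deriv ?_
  field_simp

section HeatSeries

variable {α : ℝ} {c k : ℕ → ℝ}

theorem summable_abs_heatSeries_term (hα : 0 < α) (hc : Summable fun n => |c n|) {t : ℝ}
    (ht : 0 ≤ t) (x : ℝ) :
    Summable fun n => |c n * exp (-k n ^ 2 * t ^ α / α) * sin (k n * x)| := by
  refine .of_nonneg_of_le (fun n => abs_nonneg _) (fun n => ?_) hc
  rw [abs_mul, abs_mul, abs_of_pos (exp_pos _)]
  calc |c n| * exp (-k n ^ 2 * t ^ α / α) * |sin (k n * x)| ≤ |c n| * 1 * 1 := by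
        gcongr
        · exact exp_neg_sq_mul_rpow_div_le_one hα ht _
        · exact abs_sin_le_one _
    _ = |c n| := by ring

theorem heatSeries_eq_zero_of_sin_eq_zero {x : ℝ} (h : ∀ n, sin (k n * x) = 0) (t : ℝ) :
    heatSeries α c k t x = 0 := by
  simp [heatSeries, h]

theorem heatSeries_zero_left (hα : α ≠ 0) (x : ℝ) :
    heatSeries α c k 0 x = ∑' n, c n * sin (k n * x) := by
  simp [heatSeries, zero_rpow hα]

theorem deriv_deriv_heatSeries (hα : 0 < α) (hc : Summable fun n => |c n|)
    (hc2 : Summable fun n => |c n| * k n ^ 2) {t : ℝ} (ht : 0 ≤ t) (x : ℝ) :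
    deriv (deriv (heatSeries α c k t)) x =
      -∑' n, c n * exp (-k n ^ 2 * t ^ α / α) * k n ^ 2 * sin (k n * x) := by
  have hle (n : ℕ) : |c n * exp (-k n ^ 2 * t ^ α / α)| ≤ |c n| := by
    rw [abs_mul, abs_of_pos (exp_pos _)]
    exact mul_le_of_le_one_right (abs_nonneg _) (exp_neg_sq_mul_rpow_div_le_one hα ht _)
  have h0 := hc.of_nonneg_of_le (fun n => abs_nonneg _) hle
  have h2 := hc2.of_nonneg_of_le (fun n => by positivity)
    (fun n => mul_le_mul_of_nonneg_right (hle n) (sq_nonneg _))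
  exact deriv_deriv_tsum_mul_sin h0 h2 x

theorem hasDerivAt_heatSeries_time (hα : 0 < α) (hα1 : α ≤ 1) (hc : Summable fun n => |c n|)
    (hc2 : Summable fun n => |c n| * k n ^ 2) {t : ℝ} (ht : 0 < t) (x : ℝ) :
    HasDerivAt (fun s => heatSeries α c k s x)
      (t ^ (α - 1) * deriv (deriv (heatSeries α c k t)) x) t := by
  have ht2 : 0 < t / 2 := half_pos ht
  have hterm (n : ℕ) (s : ℝ) (hs : s ∈ Set.Ioo (t / 2) (t + 1)) :
      HasDerivAt (fun s => c n * exp (-k n ^ 2 * s ^ α / α) * sin (k n * x))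
        (c n * (-k n ^ 2 * s ^ (α - 1) * exp (-k n ^ 2 * s ^ α / α)) * sin (k n * x)) s :=
    ((hasDerivAt_exp_neg_sq_mul_rpow_div hα.ne' (ht2.trans hs.1).ne' (k n)).const_mul
      (c n)).mul_const _
  have hbound (n : ℕ) (s : ℝ) (hs : s ∈ Set.Ioo (t / 2) (t + 1)) :
      ‖c n * (-k n ^ 2 * s ^ (α - 1) * exp (-k n ^ 2 * s ^ α / α)) * sin (k n * x)‖ ≤
        |c n| * k n ^ 2 * (t / 2) ^ (α - 1) := by
    have hs0 : 0 < s := ht2.trans hs.1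
    have hrpow : s ^ (α - 1) ≤ (t / 2) ^ (α - 1) :=
      rpow_le_rpow_of_nonpos ht2 hs.1.le (by linarith)
    have hnonneg : 0 ≤ k n ^ 2 * s ^ (α - 1) * exp (-k n ^ 2 * s ^ α / α) := by positivity
    rw [Real.norm_eq_abs, abs_mul, abs_mul, neg_mul, neg_mul, abs_neg, abs_of_nonneg hnonneg]
    calc |c n| * (k n ^ 2 * s ^ (α - 1) * exp (-k n ^ 2 * s ^ α / α)) * |sin (k n * x)|
        ≤ |c n| * (k n ^ 2 * (t / 2) ^ (α - 1) * 1) * 1 := by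
          gcongr
          · exact exp_neg_sq_mul_rpow_div_le_one hα hs0.le _
          · exact abs_sin_le_one _
      _ = |c n| * k n ^ 2 * (t / 2) ^ (α - 1) := by ring
  have hsum : Summable fun n => c n * exp (-k n ^ 2 * t ^ α / α) * sin (k n * x) :=
    (summable_abs_heatSeries_term hα hc ht.le x).of_abs
  have hmem : t ∈ Set.Ioo (t / 2) (t + 1) := ⟨by linarith, by linarith⟩
  have hderiv := hasDerivAt_tsum_of_isPreconnected (hc2.mul_right _) isOpen_Ioo
    isPreconnected_Ioo hterm hbound hmem hsum hmem
  refine hderiv.congr_deriv ?_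
  rw [deriv_deriv_heatSeries hα hc hc2 ht.le, mul_neg, ← tsum_mul_left, ← tsum_neg]
  exact tsum_congr fun n => by ring

theorem hasConformableDerivAt_heatSeries (hα : 0 < α) (hα1 : α ≤ 1)
    (hc : Summable fun n => |c n|) (hc2 : Summable fun n => |c n| * k n ^ 2) {t : ℝ}
    (ht : 0 < t) (x : ℝ) :
    HasConformableDerivAt α (fun s => heatSeries α c k s x)
      (deriv (deriv (heatSeries α c k t)) x) t := by
  have hcancel : t ^ (1 - α) * t ^ (α - 1) = 1 := by
    rw [← rpow_add ht]; norm_num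
  simpa only [← mul_assoc, hcancel, one_mul] using
    (hasDerivAt_heatSeries_time hα hα1 hc hc2 ht x).hasConformableDerivAt (α := α)

end HeatSeries

/-- Eigenfunction-expansion solution of the conformable fractional heat equation
on `[0,L]` with zero Dirichlet boundary conditions: given coefficients `b` with
`∑ n² |bₙ| < ∞`, the series
`u(t,x) = ∑_{n≥1} bₙ exp(-(nπ/L)² tᵅ/α) sin(nπx/L)`
converges absolutely, vanishes at `x = 0` and `x = L`, has initial data the sine
series with coefficients `bₙ`, and satisfies `T_α u = ∂²u/∂x²` for `t > 0` and
`x ∈ (0,L)`. -/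
theorem conformable_heat_series (α : ℝ) (hα : α ∈ Set.Ioo (0 : ℝ) 1)
    (L : ℝ) (hL : 0 < L) (b : ℕ → ℝ)
    (hb : Summable (fun n : ℕ => ((n : ℝ) + 1) ^ 2 * |b (n + 1)|))
    (u : ℝ → ℝ → ℝ)
    (hu : ∀ t x : ℝ, u t x =
      ∑' n : ℕ, b (n + 1) *
        Real.exp (-(((n : ℝ) + 1) * Real.pi / L) ^ 2 * t ^ α / α) *
          Real.sin (((n : ℝ) + 1) * Real.pi * x / L)) :
    (∀ t : ℝ, 0 ≤ t → ∀ x ∈ Set.Icc (0 : ℝ) L,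
        Summable (fun n : ℕ => |b (n + 1) *
          Real.exp (-(((n : ℝ) + 1) * Real.pi / L) ^ 2 * t ^ α / α) *
            Real.sin (((n : ℝ) + 1) * Real.pi * x / L)|)) ∧
      (∀ t : ℝ, 0 ≤ t → u t 0 = 0 ∧ u t L = 0) ∧
      (∀ x : ℝ, u 0 x =
        ∑' n : ℕ, b (n + 1) * Real.sin (((n : ℝ) + 1) * Real.pi * x / L)) ∧
      ∀ t : ℝ, 0 < t → ∀ x ∈ Set.Ioo (0 : ℝ) L,
        HasConformableDerivAt α (fun s : ℝ => u s x)
          (deriv (deriv (fun z : ℝ => u t z)) x) t := by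
  obtain ⟨hα0, hα1⟩ := hα
  set k : ℕ → ℝ := fun n => ((n : ℝ) + 1) * π / L
  have hk (n : ℕ) (x : ℝ) : ((n : ℝ) + 1) * π * x / L = k n * x := by ring
  have hu_eq : u = heatSeries α (fun n => b (n + 1)) k := by
    ext t x
    simp only [hu, heatSeries, hk]
    rfl
  have hc : Summable fun n => |b (n + 1)| :=
    hb.of_nonneg_of_le (fun n => abs_nonneg _) fun n =>
      le_mul_of_one_le_left (abs_nonneg _) (one_le_pow₀ (by linarith [n.cast_nonneg (α := ℝ)]))
  have hc2 : Summable fun n => |b (n + 1)| * k n ^ 2 :=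
    (hb.mul_left ((π / L) ^ 2)).congr fun n => by ring
  have hsin_L (n : ℕ) : sin (k n * L) = 0 := by
    rw [← hk, mul_div_cancel_right₀ _ hL.ne']
    exact_mod_cast sin_nat_mul_pi (n + 1)
  refine ⟨fun t ht x _ => ?_, fun t _ => ?_, fun x => ?_, fun t ht x _ => ?_⟩
  · simpa only [hk] using summable_abs_heatSeries_term hα0 hc ht x
  · rw [hu_eq]
    exact ⟨heatSeries_eq_zero_of_sin_eq_zero (by simp) t,
      heatSeries_eq_zero_of_sin_eq_zero hsin_L t⟩
  · simp only [hu_eq, heatSeries_zero_left hα0.ne', hk]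
  · rw [hu_eq]
    exact hasConformableDerivAt_heatSeries hα0 hα1.le hc hc2 ht x
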